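/- arXiv:2107.07162 — 2 statements merged into one kernel-verified Lean document; each statement's English description precedes it below -/
import Mathlib

section
/- The ternary Nambu bracket on ℝ³ given by the Jacobian determinant satisfies the Filippov–Jacobi identity: {g, h, {f₁, f₂, f₃}} = {{g, h, f₁}, f₂, f₃} + {f₁, {g, h, f₂}, f₃} + {f₁, f₂, {g, h, f₃}} for all smooth functions g, h, f₁, f₂, f₃. -/
noncomputable section

/-- Partial derivative of `f : ℝ³ → ℝ` in the `i`-th coordinate direction. -/
def pd (i : Fin 3) (f : (Fin 3 → ℝ) → ℝ) (x : Fin 3 → ℝ) : ℝ :=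
  fderiv ℝ f x (Pi.single i 1)

/-- The ternary Nambu bracket {f,g,h} = det(∂(f,g,h)/∂(x,y,z)) on ℝ³. -/
def nb (f g h : (Fin 3 → ℝ) → ℝ) : (Fin 3 → ℝ) → ℝ :=
  fun x => Matrix.det !![pd 0 f x, pd 1 f x, pd 2 f x;
                         pd 0 g x, pd 1 g x, pd 2 g x;
                         pd 0 h x, pd 1 h x, pd 2 h x]

lemma contDiff_pd {f : (Fin 3 → ℝ) → ℝ} (hf : ContDiff ℝ (⊤ : ℕ∞) f) (i : Fin 3) :
    ContDiff ℝ (⊤ : ℕ∞) (pd i f) :=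
  (hf.fderiv_right (by simp)).clm_apply contDiff_const

lemma diff_pd {f : (Fin 3 → ℝ) → ℝ} (hf : ContDiff ℝ (⊤ : ℕ∞) f) (i : Fin 3) (x) :
    DifferentiableAt ℝ (pd i f) x :=
  ((contDiff_pd hf i).differentiable (by simp)).differentiableAt

lemma pd_symm {f : (Fin 3 → ℝ) → ℝ} (hf : ContDiff ℝ (⊤ : ℕ∞) f) (i j : Fin 3) (x) :
    pd i (pd j f) x = pd j (pd i f) x := by
  have hd : Differentiable ℝ f := hf.differentiable (by simp)
  have h2 : DifferentiableAt ℝ (fderiv ℝ f) x :=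
    ((hf.fderiv_right (m := (⊤ : ℕ∞)) (by simp)).differentiable (by simp)).differentiableAt
  have key := second_derivative_symmetric (f := f) (f' := fderiv ℝ f)
    (f'' := fderiv ℝ (fderiv ℝ f) x) (fun y => (hd y).hasFDerivAt) h2.hasFDerivAt
    (Pi.single i 1) (Pi.single j 1)
  have e : ∀ (k l : Fin 3), pd k (pd l f) x
      = fderiv ℝ (fderiv ℝ f) x (Pi.single k 1) (Pi.single l 1) := by
    intro k l
    have : pd l f = fun y => fderiv ℝ f y (Pi.single l 1) := rfl
    rw [pd, this, fderiv_clm_apply h2 (differentiableAt_const _)]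
    simp
  rw [e, e, key]

lemma nb_expand (f g h : (Fin 3 → ℝ) → ℝ) :
    nb f g h = fun y =>
      pd 0 f y * pd 1 g y * pd 2 h y - pd 0 f y * pd 2 g y * pd 1 h y
      - pd 1 f y * pd 0 g y * pd 2 h y + pd 1 f y * pd 2 g y * pd 0 h y
      + pd 2 f y * pd 0 g y * pd 1 h y - pd 2 f y * pd 1 g y * pd 0 h y := by
  funext y
  simp [nb, Matrix.det_fin_three]

lemma pd_nb {f g h : (Fin 3 → ℝ) → ℝ} (hf : ContDiff ℝ (⊤ : ℕ∞) f) (hg : ContDiff ℝ (⊤ : ℕ∞) g)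
    (hh : ContDiff ℝ (⊤ : ℕ∞) h) (i : Fin 3) (x) :
    pd i (nb f g h) x =
      (pd i (pd 0 f) x * pd 1 g x * pd 2 h x + pd 0 f x * pd i (pd 1 g) x * pd 2 h x
        + pd 0 f x * pd 1 g x * pd i (pd 2 h) x)
      - (pd i (pd 0 f) x * pd 2 g x * pd 1 h x + pd 0 f x * pd i (pd 2 g) x * pd 1 h x
        + pd 0 f x * pd 2 g x * pd i (pd 1 h) x)
      - (pd i (pd 1 f) x * pd 0 g x * pd 2 h x + pd 1 f x * pd i (pd 0 g) x * pd 2 h x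
        + pd 1 f x * pd 0 g x * pd i (pd 2 h) x)
      + (pd i (pd 1 f) x * pd 2 g x * pd 0 h x + pd 1 f x * pd i (pd 2 g) x * pd 0 h x
        + pd 1 f x * pd 2 g x * pd i (pd 0 h) x)
      + (pd i (pd 2 f) x * pd 0 g x * pd 1 h x + pd 2 f x * pd i (pd 0 g) x * pd 1 h x
        + pd 2 f x * pd 0 g x * pd i (pd 1 h) x)
      - (pd i (pd 2 f) x * pd 1 g x * pd 0 h x + pd 2 f x * pd i (pd 1 g) x * pd 0 h x
        + pd 2 f x * pd 1 g x * pd i (pd 0 h) x) := by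
  have A : ∀ j, HasFDerivAt (pd j f) (fderiv ℝ (pd j f) x) x :=
    fun j => (diff_pd hf j x).hasFDerivAt
  have B : ∀ j, HasFDerivAt (pd j g) (fderiv ℝ (pd j g) x) x :=
    fun j => (diff_pd hg j x).hasFDerivAt
  have C : ∀ j, HasFDerivAt (pd j h) (fderiv ℝ (pd j h) x) x :=
    fun j => (diff_pd hh j x).hasFDerivAt
  have H := (((((((A 0).mul (B 1)).mul (C 2)).sub (((A 0).mul (B 2)).mul (C 1))).sub
      (((A 1).mul (B 0)).mul (C 2))).add (((A 1).mul (B 2)).mul (C 0))).add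
      (((A 2).mul (B 0)).mul (C 1))).sub (((A 2).mul (B 1)).mul (C 0))
  rw [nb_expand]
  have := H.fderiv
  show fderiv ℝ (pd 0 f * pd 1 g * pd 2 h - pd 0 f * pd 2 g * pd 1 h - pd 1 f * pd 0 g * pd 2 h + pd 1 f * pd 2 g * pd 0 h + pd 2 f * pd 0 g * pd 1 h - pd 2 f * pd 1 g * pd 0 h) x (Pi.single i 1) = _
  rw [this]
  simp only [ContinuousLinearMap.sub_apply, ContinuousLinearMap.add_apply,
    ContinuousLinearMap.smul_apply, smul_eq_mul, Pi.mul_apply]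
  simp only [pd]
  ring

/-- Filippov–Jacobi identity for the Jacobian ternary bracket on ℝ³. -/
theorem nambu_filippov_jacobi :
    ∀ g h f₁ f₂ f₃ : (Fin 3 → ℝ) → ℝ, ContDiff ℝ (⊤ : ℕ∞) g → ContDiff ℝ (⊤ : ℕ∞) h →
      ContDiff ℝ (⊤ : ℕ∞) f₁ → ContDiff ℝ (⊤ : ℕ∞) f₂ → ContDiff ℝ (⊤ : ℕ∞) f₃ →
      ∀ x, nb g h (nb f₁ f₂ f₃) x
          = nb (nb g h f₁) f₂ f₃ x + nb f₁ (nb g h f₂) f₃ x + nb f₁ f₂ (nb g h f₃) x := by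
  intro g h f₁ f₂ f₃ hg hh h1 h2 h3 x
  have nbx : ∀ (a b c : (Fin 3 → ℝ) → ℝ) (y : Fin 3 → ℝ), nb a b c y =
      pd 0 a y * pd 1 b y * pd 2 c y - pd 0 a y * pd 2 b y * pd 1 c y
      - pd 1 a y * pd 0 b y * pd 2 c y + pd 1 a y * pd 2 b y * pd 0 c y
      + pd 2 a y * pd 0 b y * pd 1 c y - pd 2 a y * pd 1 b y * pd 0 c y :=
    fun a b c y => congrFun (nb_expand a b c) y
  rw [nbx (nb g h f₁) f₂ f₃ x, nbx f₁ (nb g h f₂) f₃ x, nbx f₁ f₂ (nb g h f₃) x,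
    nbx g h (nb f₁ f₂ f₃) x]
  rw [pd_nb h1 h2 h3 0 x, pd_nb h1 h2 h3 1 x, pd_nb h1 h2 h3 2 x,
    pd_nb hg hh h1 0 x, pd_nb hg hh h1 1 x, pd_nb hg hh h1 2 x,
    pd_nb hg hh h2 0 x, pd_nb hg hh h2 1 x, pd_nb hg hh h2 2 x,
    pd_nb hg hh h3 0 x, pd_nb hg hh h3 1 x, pd_nb hg hh h3 2 x]
  simp only [pd_symm hg 1 0, pd_symm hg 2 0, pd_symm hg 2 1,
    pd_symm hh 1 0, pd_symm hh 2 0, pd_symm hh 2 1,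
    pd_symm h1 1 0, pd_symm h1 2 0, pd_symm h1 2 1,
    pd_symm h2 1 0, pd_symm h2 2 0, pd_symm h2 2 1,
    pd_symm h3 1 0, pd_symm h3 2 0, pd_symm h3 2 1]
  ring
end
end

section
/- For the Poisson bracket on polynomials in two variables given by {f,g} = xy·(∂ₓf ∂ᵧg − ∂ᵧf ∂ₓg), a polynomial f is a Casimir (i.e., {f,g} = 0 for all polynomials g) if and only if f is a constant. Hence the zeroth Lichnerowicz–Poisson cohomology of the quadratic Poisson structure P₂ = xy ∂ₓ∧∂ᵧ on polynomials is one-dimensional. -/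
/-!
Bracketing `f` with `y` and with `x` gives `xy ∂ₓf` and `-xy ∂ᵧf`. As `xy` is not a zero divisor,
a Casimir has both partial derivatives zero, and in characteristic zero this forces `f` to be
constant: the coefficient of a monomial `m` with `m i ≠ 0` reappears in `∂ᵢf` multiplied by `m i`.
-/

noncomputable section
open MvPolynomial

/-- The Poisson bracket of the quadratic Poisson structure P₂ = xy ∂ₓ∧∂ᵧ on ℝ[x,y]. -/
def pb2 (f g : MvPolynomial (Fin 2) ℝ) : MvPolynomial (Fin 2) ℝ :=
  X 0 * X 1 * (pderiv 0 f * pderiv 1 g - pderiv 1 f * pderiv 0 g)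

theorem MvPolynomial.eq_C_of_pderiv_eq_zero {R σ : Type*} [CommSemiring R] [IsAddTorsionFree R]
    {f : MvPolynomial σ R} (h : ∀ i, pderiv i f = 0) : f = C (coeff 0 f) := by
  classical
  ext m
  rw [coeff_C]
  split_ifs with hm
  · rw [hm]
  obtain ⟨i, hi⟩ : ∃ i, m i ≠ 0 := by
    by_contra! hzero
    exact hm (Finsupp.ext hzero).symm
  have hcoeff := coeff_pderiv (i := i) f (m - Finsupp.single i 1)
  rw [h i, coeff_zero, Finsupp.sub_add_single_one_cancel hi, mul_comm, ← Nat.cast_succ,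
    ← nsmul_eq_mul] at hcoeff
  exact (nsmul_eq_zero_iff_right (Nat.succ_ne_zero _)).mp hcoeff.symm

/-- f is a Casimir of P₂ = xy ∂ₓ∧∂ᵧ iff f is a constant; hence H⁰_LP is one-dimensional. -/
theorem casimir_P2_iff_const (f : MvPolynomial (Fin 2) ℝ) :
    (∀ g : MvPolynomial (Fin 2) ℝ, pb2 f g = 0) ↔ ∃ c : ℝ, f = C c := by
  constructor
  · intro hcasimir
    have hxy : (X 0 * X 1 : MvPolynomial (Fin 2) ℝ) ≠ 0 := mul_ne_zero (X_ne_zero _) (X_ne_zero _)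
    refine ⟨coeff 0 f, eq_C_of_pderiv_eq_zero fun i => ?_⟩
    fin_cases i
    · simpa [pb2, hxy] using hcasimir (X 1)
    · simpa [pb2, hxy] using hcasimir (X 0)
  · rintro ⟨c, rfl⟩ g
    simp [pb2]
end
end
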